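/- With the permutations π₁, π₂, π₃ of ℤ_{m^α} × ℤ_{2m} defined as in the permutation representation of Γ₁ (with D = k·m^{α−1}, m an odd prime, α ≥ 2), the relations π₂π₁² = π₁²π₂^{1+D} and π₃²π₂ = π₂^{1+D}π₃² hold, π₁ has order 2m, π₂ has order m^α, and π₃ has order 2m. -/

import Mathlib

/-- `D = k·m^(α-1)` as an element of `ℤ_{m^α}`. -/
def Dval (m α k : ℕ) : ZMod (m ^ α) := ((k * m ^ (α - 1) : ℕ) : ZMod (m ^ α))

/-- The map `b ↦ b̄ = -b + (b(b-1)/2)·D` on `ℤ_{m^α}`. -/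
def barMap (m α k : ℕ) (b : ZMod (m ^ α)) : ZMod (m ^ α) :=
  -b + b * (b - 1) * (2 : ZMod (m ^ α))⁻¹ * Dval m α k

/-- The permutation `π₁` of `ℤ_{m^α} × ℤ_{2m}`. -/
def piOne (m α k : ℕ) : ZMod (m ^ α) × ZMod (2 * m) → ZMod (m ^ α) × ZMod (2 * m) :=
  fun x =>
    if Even x.2.val then
      (barMap m α k x.1 + ((x.2.val / 2 : ℕ) : ZMod (m ^ α)) * Dval m α k, -x.2)
    else
      (barMap m α k x.1 + 2 - (((x.2.val - 1) / 2 : ℕ) : ZMod (m ^ α)) * Dval m α k, 2 - x.2)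

/-- The permutation `π₂` of `ℤ_{m^α} × ℤ_{2m}`. -/
def piTwo (m α k : ℕ) : ZMod (m ^ α) × ZMod (2 * m) → ZMod (m ^ α) × ZMod (2 * m) :=
  fun x =>
    if Even x.2.val then
      (x.1 + 1 + ((x.2.val / 2 : ℕ) : ZMod (m ^ α)) * Dval m α k, x.2)
    else
      (x.1 - 1 - (((x.2.val - 1) / 2 : ℕ) : ZMod (m ^ α)) * Dval m α k, x.2 - 2)

/-- The permutation `π₃` of `ℤ_{m^α} × ℤ_{2m}`. -/
def piThree (m α k : ℕ) : ZMod (m ^ α) × ZMod (2 * m) → ZMod (m ^ α) × ZMod (2 * m) :=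
  fun x => (x.1, x.2 + 1)



section
variable (m α k : ℕ)

local notation "N" => m ^ α
local notation "D" => Dval m α k

lemma DD (hα : 2 ≤ α) : D * D = 0 := by
  rw [Dval, ← Nat.cast_mul, ZMod.natCast_eq_zero_iff]
  calc m ^ α ∣ m ^ (α-1) * m ^ (α-1) := by
        rw [← pow_add]; exact pow_dvd_pow m (by omega)
    _ ∣ k * m ^ (α - 1) * (k * m ^ (α - 1)) := by
        apply mul_dvd_mul <;> exact Dvd.intro k (mul_comm _ _)

lemma mD (hα : 1 ≤ α) : (m : ZMod N) * D = 0 := by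
  rw [Dval, ← Nat.cast_mul, ZMod.natCast_eq_zero_iff]
  calc m ^ α = m * m ^ (α - 1) := by rw [← pow_succ']; congr 1; omega
    _ ∣ m * (k * m ^ (α - 1)) := by rw [mul_comm k]; exact mul_dvd_mul_left m (dvd_mul_right _ k)

lemma red (hα : 1 ≤ α) {a b : ℕ} (h : a ≡ b [MOD m]) :
    (a : ZMod N) * D = (b : ZMod N) * D := by
  obtain ⟨t, ht⟩ : (m : ℤ) ∣ (b : ℤ) - a := Nat.modEq_iff_dvd.mp h
  have hb : ((b : ℤ) : ZMod N) = ((a : ℤ) : ZMod N) + (m : ZMod N) * ((t : ℤ) : ZMod N) := by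
    have : (b : ℤ) = a + m * t := by linarith
    rw [this]; push_cast; ring
  push_cast at hb
  rw [hb, add_mul, mul_assoc, mul_comm ((t:ℤ) : ZMod N), ← mul_assoc, mD m α k hα,
    zero_mul, add_zero]

lemma h2inv (hmodd : Odd m) (hm1 : 1 ≤ m) : (2 : ZMod N) * (2 : ZMod N)⁻¹ = 1 := by
  apply ZMod.mul_inv_of_unit
  have : ¬ (2 : ℕ) ∣ m ^ α := by
    intro h
    have : Odd (m ^ α) := hmodd.pow
    rw [Nat.odd_iff] at this; omega
  have := (ZMod.isUnit_prime_iff_not_dvd (n := N) Nat.prime_two).mpr this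
  simpa using this
end


section
variable (m α k : ℕ) (hα : 2 ≤ α) (hmodd : Odd m)
include hα hmodd
local notation "N" => m ^ α
local notation "D" => Dval m α k

lemma bar_add (b t : ZMod N) :
    barMap m α k (b + t * D) = barMap m α k b - t * D := by
  have hDD := DD m α k hα
  simp only [barMap]
  linear_combination ((2*b-1)*t*(2 : ZMod N)⁻¹ + t*t*(2 : ZMod N)⁻¹*D) * hDD

lemma bar_bar (b : ZMod N) :
    barMap m α k (barMap m α k b) = b + b * D := by
  have hDD := DD m α k hα
  have h2 := h2inv m α hmodd hmodd.pos
  set i := (2 : ZMod N)⁻¹ with hi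
  simp only [barMap, ← hi]
  linear_combination (b*D)*h2 + (-(b*(b-1)*i)*(2*b+1)*i + (b*(b-1)*i)^2*i*D)*hDD

lemma bar_bar_two (b : ZMod N) :
    barMap m α k (barMap m α k b + 2) = b + b * D - 2 + (1 - 2*b) * D := by
  have hDD := DD m α k hα
  have h2 := h2inv m α hmodd hmodd.pos
  set i := (2 : ZMod N)⁻¹ with hi
  simp only [barMap, ← hi]
  linear_combination ((1-b)*D)*h2 + ((3-2*b)*(b*(b-1)*i)*i + (b*(b-1)*i)^2*i*D)*hDD
end

lemma modeq3 (m a b : ℕ) (h : a = b ∨ a + m = b ∨ a = b + m ∨ a = b + 2*m ∨ a + 2*m = b) :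
    a ≡ b [MOD m] := by
  unfold Nat.ModEq
  rcases h with rfl | h | rfl | rfl | h
  · rfl
  · subst h; rw [Nat.add_mod_right]
  · rw [Nat.add_mod_right]
  · rw [two_mul, ← add_assoc, Nat.add_mod_right, Nat.add_mod_right]
  · subst h; rw [two_mul, ← add_assoc, Nat.add_mod_right, Nat.add_mod_right]

section
variable {m : ℕ} (hm3 : 3 ≤ m)
include hm3

lemma twoval : (2 : ZMod (2*m)).val = 2 := by
  haveI : NeZero (2*m) := ⟨by omega⟩
  have : (2 : ZMod (2*m)) = ((2:ℕ) : ZMod (2*m)) := by norm_cast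
  rw [this, ZMod.val_natCast, Nat.mod_eq_of_lt (by omega)]

lemma negval (c : ZMod (2*m)) (hpos : 0 < c.val) : (-c).val = 2*m - c.val := by
  haveI : NeZero (2*m) := ⟨by omega⟩
  rw [ZMod.neg_val, if_neg]
  intro h; rw [h] at hpos; simp [ZMod.val_zero] at hpos

lemma C1 (c : ZMod (2*m)) (h : Even c.val) :
    Even (-c).val ∧ ((-c).val/2 + c.val) ≡ c.val/2 [MOD m] := by
  haveI : NeZero (2*m) := ⟨by omega⟩
  have hv : c.val < 2*m := ZMod.val_lt c
  rw [Nat.even_iff] at h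
  rcases Nat.eq_zero_or_pos c.val with h0 | h0
  · have : c = 0 := (ZMod.val_eq_zero c).mp h0
    subst this
    simp only [neg_zero, ZMod.val_zero]
    exact ⟨Even.zero, by simp [Nat.ModEq]⟩
  · rw [negval hm3 c h0]
    constructor
    · rw [Nat.even_iff]; omega
    · apply modeq3; omega

lemma C2 (c : ZMod (2*m)) (h : Odd c.val) :
    Odd (2 - c).val ∧ (((2-c).val - 1)/2 + c.val) ≡ ((c.val-1)/2 + 1) [MOD m] := by
  haveI : NeZero (2*m) := ⟨by omega⟩
  have hv : c.val < 2*m := ZMod.val_lt c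
  rw [Nat.odd_iff] at h
  have h0 : 0 < c.val := by omega
  have key : (2 - c).val = (2 + (2*m - c.val)) % (2*m) := by
    rw [sub_eq_add_neg, add_comm, ZMod.val_add, negval hm3 c h0, twoval hm3, add_comm]
  by_cases h1 : c.val = 1
  · have : (2 + (2*m - c.val)) = 2*m + 1 := by omega
    rw [this, Nat.add_mod_left, Nat.mod_eq_of_lt (by omega)] at key
    rw [key]
    exact ⟨Nat.odd_iff.mpr (by omega), by apply modeq3; omega⟩
  · rw [Nat.mod_eq_of_lt (by omega)] at key
    rw [key]
    exact ⟨Nat.odd_iff.mpr (by omega), by apply modeq3; omega⟩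

lemma C3 (c : ZMod (2*m)) (h : Odd c.val) :
    Odd (c - 2).val ∧ ((c-2).val - 1)/2 ≡ ((c.val-1)/2 + (m-1)) [MOD m]
      ∧ ((c-2).val + 2) ≡ c.val [MOD m] := by
  haveI : NeZero (2*m) := ⟨by omega⟩
  have hv : c.val < 2*m := ZMod.val_lt c
  rw [Nat.odd_iff] at h
  have hneg2 : (-2 : ZMod (2*m)).val = 2*m - 2 := by
    rw [negval hm3 2 (by rw [twoval hm3]; omega), twoval hm3]
  have key : (c - 2).val = (c.val + (2*m - 2)) % (2*m) := by
    rw [sub_eq_add_neg, ZMod.val_add, hneg2]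
  by_cases h1 : c.val = 1
  · have : (c.val + (2*m - 2)) = 2*m - 1 := by omega
    rw [this, Nat.mod_eq_of_lt (by omega)] at key
    rw [key]
    refine ⟨Nat.odd_iff.mpr (by omega), by apply modeq3; omega, by apply modeq3; omega⟩
  · have : (c.val + (2*m - 2)) = 2*m + (c.val - 2) := by omega
    rw [this, Nat.add_mod_left, Nat.mod_eq_of_lt (by omega)] at key
    rw [key]
    refine ⟨Nat.odd_iff.mpr (by omega), by apply modeq3; omega, by apply modeq3; omega⟩

lemma C4 (c : ZMod (2*m)) (h : Even c.val) :
    Even (c + 2).val ∧ (c+2).val/2 ≡ (c.val/2 + 1) [MOD m] := by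
  haveI : NeZero (2*m) := ⟨by omega⟩
  have hv : c.val < 2*m := ZMod.val_lt c
  rw [Nat.even_iff] at h
  have key : (c + 2).val = (c.val + 2) % (2*m) := by rw [ZMod.val_add, twoval hm3]
  by_cases h1 : c.val = 2*m - 2
  · have : c.val + 2 = 2*m + 0 := by omega
    rw [this, Nat.add_mod_left, Nat.zero_mod] at key
    rw [key]
    exact ⟨Even.zero, by apply modeq3; omega⟩
  · rw [Nat.mod_eq_of_lt (by omega)] at key
    rw [key]
    exact ⟨Nat.even_iff.mpr (by omega), by apply modeq3; omega⟩

lemma C5 (c : ZMod (2*m)) (h : Odd c.val) :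
    Odd (c + 2).val ∧ ((c+2).val - 1)/2 ≡ ((c.val-1)/2 + 1) [MOD m] := by
  haveI : NeZero (2*m) := ⟨by omega⟩
  have hv : c.val < 2*m := ZMod.val_lt c
  rw [Nat.odd_iff] at h
  have key : (c + 2).val = (c.val + 2) % (2*m) := by rw [ZMod.val_add, twoval hm3]
  by_cases h1 : c.val = 2*m - 1
  · have : c.val + 2 = 2*m + 1 := by omega
    rw [this, Nat.add_mod_left, Nat.mod_eq_of_lt (by omega)] at key
    rw [key]
    exact ⟨Nat.odd_iff.mpr (by omega), by apply modeq3; omega⟩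
  · rw [Nat.mod_eq_of_lt (by omega)] at key
    rw [key]
    exact ⟨Nat.odd_iff.mpr (by omega), by apply modeq3; omega⟩
end




section
variable (m α k : ℕ) (hm3 : 3 ≤ m) (hα : 2 ≤ α) (hmodd : Odd m)
local notation "N" => m ^ α
local notation "D" => Dval m α k

include hm3 hα hmodd in
lemma E1 (b : ZMod N) (c : ZMod (2*m)) (h : Even c.val) :
    piOne m α k (piOne m α k (b, c)) =
      (b + (b - (c.val : ZMod N)) * D, c) := by
  haveI : NeZero (2*m) := ⟨by omega⟩
  have hDD := DD m α k hα
  have hC := C1 hm3 c h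
  have hs1 : piOne m α k (b, c) =
      (barMap m α k b + ((c.val / 2 : ℕ) : ZMod N) * D, -c) := by
    simp only [piOne]; rw [if_pos h]
  rw [hs1]
  have hs2 : piOne m α k (barMap m α k b + ((c.val / 2 : ℕ) : ZMod N) * D, -c) =
      (barMap m α k (barMap m α k b + ((c.val / 2 : ℕ) : ZMod N) * D)
        + (((-c).val / 2 : ℕ) : ZMod N) * D, -(-c)) := by
    simp only [piOne]; rw [if_pos hC.1]
  rw [hs2, bar_add m α k hα hmodd, bar_bar m α k hα hmodd]
  have hr : ((((-c).val / 2 + c.val : ℕ)) : ZMod N) * D = ((c.val / 2 : ℕ) : ZMod N) * D :=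
    red m α k (by omega) hC.2
  push_cast at hr
  rw [Prod.mk.injEq]
  exact ⟨by linear_combination hr, by rw [neg_neg]⟩

include hm3 hα hmodd in
lemma E2 (b : ZMod N) (c : ZMod (2*m)) (h : Odd c.val) :
    piOne m α k (piOne m α k (b, c)) =
      (b + ((c.val : ZMod N) - b) * D, c) := by
  haveI : NeZero (2*m) := ⟨by omega⟩
  have hDD := DD m α k hα
  have hC := C2 hm3 c h
  have hno : ¬ Even c.val := by rw [Nat.even_iff]; rw [Nat.odd_iff] at h; omega
  have hno2 : ¬ Even (2 - c).val := by
    rw [Nat.even_iff]; have := Nat.odd_iff.mp hC.1; omega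
  have hs1 : piOne m α k (b, c) =
      (barMap m α k b + 2 - (((c.val - 1) / 2 : ℕ) : ZMod N) * D, 2 - c) := by
    simp only [piOne]; rw [if_neg hno]
  rw [hs1]
  have hs2 : piOne m α k (barMap m α k b + 2 - (((c.val - 1) / 2 : ℕ) : ZMod N) * D, 2 - c) =
      (barMap m α k (barMap m α k b + 2 - (((c.val - 1) / 2 : ℕ) : ZMod N) * D)
        + 2 - ((((2-c).val - 1) / 2 : ℕ) : ZMod N) * D, 2 - (2 - c)) := by
    simp only [piOne]; rw [if_neg hno2]
  rw [hs2]
  have hsh : barMap m α k b + 2 - (((c.val - 1) / 2 : ℕ) : ZMod N) * D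
      = (barMap m α k b + 2) + (-(((c.val - 1) / 2 : ℕ) : ZMod N)) * D := by ring
  rw [hsh, bar_add m α k hα hmodd, bar_bar_two m α k hα hmodd]
  have hr : ((((2-c).val - 1) / 2 + c.val : ℕ) : ZMod N) * D
      = (((c.val - 1) / 2 + 1 : ℕ) : ZMod N) * D := red m α k (by omega) hC.2
  push_cast at hr
  rw [Prod.mk.injEq]
  exact ⟨by linear_combination -hr, by ring⟩
end

lemma tri (j : ℕ) : (j+1)*j/2 = j*(j-1)/2 + j := by
  rcases j with _ | n
  · simp
  · rw [Nat.add_sub_cancel]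
    have h2 : 2 ∣ (n+1)*n := by
      have := Nat.even_mul_succ_self n
      rw [mul_comm] at this
      exact this.two_dvd
    have hE : (n+1+1)*(n+1) = (n+1)*n + 2*(n+1) := by ring
    omega

section
variable (m α k : ℕ) (hm3 : 3 ≤ m) (hα : 2 ≤ α) (hmodd : Odd m)
local notation "N" => m ^ α
local notation "D" => Dval m α k

include hm3 in
lemma F1 (c : ZMod (2*m)) (h : Even c.val) : ∀ (j : ℕ) (b : ZMod N),
    (piTwo m α k)^[j] (b, c)
      = (b + (j : ZMod N) * (1 + ((c.val / 2 : ℕ) : ZMod N) * D), c) := by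
  intro j
  induction j with
  | zero => intro b; simp
  | succ j ih =>
    intro b
    rw [Function.iterate_succ_apply', ih]
    simp only [piTwo]
    rw [if_pos h, Prod.mk.injEq]
    refine ⟨?_, rfl⟩
    push_cast
    ring

include hm3 hα in
lemma F2 (c : ZMod (2*m)) (h : Odd c.val) : ∀ (j : ℕ) (b : ZMod N),
    (piTwo m α k)^[j] (b, c)
      = (b - (j : ZMod N) - ((j * ((c.val - 1)/2) : ℕ) : ZMod N) * D
          + ((j*(j-1)/2 : ℕ) : ZMod N) * D, c - ((2*j : ℕ) : ZMod (2*m))) := by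
  haveI : NeZero (2*m) := ⟨by omega⟩
  intro j
  induction j generalizing c with
  | zero => intro b; push_cast; simp
  | succ j ih =>
    intro b
    have hno : ¬ Even c.val := by rw [Nat.even_iff]; rw [Nat.odd_iff] at h; omega
    have hC := C3 hm3 c h
    have hstep : piTwo m α k (b, c)
        = (b - 1 - (((c.val - 1) / 2 : ℕ) : ZMod N) * D, c - 2) := by
      simp only [piTwo]; rw [if_neg hno]
    rw [Function.iterate_succ_apply, hstep, ih _ hC.1]
    have hmm : ∀ jj : ℕ, jj*(m-1) + jj = m*jj := by
      intro jj
      obtain ⟨m', rfl⟩ : ∃ m', m = m' + 1 := ⟨m-1, by omega⟩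
      simp [Nat.add_sub_cancel]
      ring
    have h1 : ((j * (((c-2).val - 1)/2) + j : ℕ) : ZMod N) * D
        = ((j * ((c.val - 1)/2) : ℕ) : ZMod N) * D := by
      apply red m α k (by omega)
      calc j * (((c-2).val - 1)/2) + j
          ≡ j * ((c.val-1)/2 + (m-1)) + j [MOD m] := (hC.2.1.mul_left j).add_right j
        _ = j * ((c.val-1)/2) + (j*(m-1) + j) := by ring
        _ = j * ((c.val-1)/2) + m*j := by rw [hmm]
        _ ≡ j * ((c.val-1)/2) + 0 [MOD m] :=
            Nat.ModEq.add_left _ ((Nat.modEq_zero_iff_dvd).mpr ⟨j, rfl⟩)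
        _ = j * ((c.val-1)/2) := by ring
    push_cast at h1
    rw [Prod.mk.injEq]
    constructor
    · have ht : (j+1)*((j+1)-1)/2 = j*(j-1)/2 + j := by
        rw [Nat.add_sub_cancel]; exact tri j
      rw [ht]
      push_cast [Nat.succ_mul, Nat.add_mul]
      linear_combination -h1
    · push_cast
      ring
end

section
variable (m α k : ℕ) (hm3 : 3 ≤ m) (hα : 2 ≤ α) (hmodd : Odd m)
local notation "N" => m ^ α
local notation "D" => Dval m α k

include hm3 hα in
lemma castn : ((1 + k * m ^ (α - 1) : ℕ) : ZMod N) = 1 + D := by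
  rw [Dval]; push_cast; ring

include hm3 hα in
lemma G1 (b : ZMod N) (c : ZMod (2*m)) (h : Even c.val) :
    (piTwo m α k)^[1 + k * m ^ (α - 1)] (b, c)
      = (b + 1 + ((c.val / 2 : ℕ) : ZMod N) * D + D, c) := by
  rw [F1 m α k hm3 c h, castn m α k hm3 hα]
  have hDD := DD m α k hα
  rw [Prod.mk.injEq]
  exact ⟨by linear_combination ((c.val / 2 : ℕ) : ZMod N) * hDD, rfl⟩

include hm3 hα hmodd in
lemma G2 (b : ZMod N) (c : ZMod (2*m)) (h : Odd c.val) :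
    (piTwo m α k)^[1 + k * m ^ (α - 1)] (b, c)
      = (b - 1 - D - (((c.val - 1) / 2 : ℕ) : ZMod N) * D, c - 2) := by
  haveI : NeZero (2*m) := ⟨by omega⟩
  rw [F2 m α k hm3 hα c h, castn m α k hm3 hα]
  set n := 1 + k * m ^ (α - 1) with hn
  have hmdvd : m ∣ n - 1 := by
    rw [hn, Nat.add_sub_cancel_left]
    exact Dvd.dvd.mul_left (dvd_pow_self m (by omega)) k
  have hA : ((n * ((c.val - 1)/2) : ℕ) : ZMod N) * D
      = (((c.val - 1)/2 : ℕ) : ZMod N) * D := by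
    apply red m α k (by omega)
    have : n ≡ 1 [MOD m] := ((Nat.modEq_iff_dvd' (by omega)).mpr hmdvd).symm
    simpa using this.mul_right ((c.val - 1)/2)
  have hB : ((n*(n-1)/2 : ℕ) : ZMod N) * D = 0 := by
    have hdvd : m ∣ n*(n-1)/2 := by
      have heven : 2 ∣ n*(n-1) := by
        rcases Nat.even_or_odd n with he | ho
        · exact Dvd.dvd.mul_right he.two_dvd _
        · have : Even (n-1) := by
            rw [Nat.even_iff]; rw [Nat.odd_iff] at ho; omega
          exact Dvd.dvd.mul_left this.two_dvd _
      have h2X : m ∣ 2 * (n*(n-1)/2) := by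
        rw [Nat.mul_div_cancel' heven]
        exact Dvd.dvd.mul_left hmdvd n
      have hcop : Nat.Coprime m 2 := by
        have hnd : ¬ (2 ∣ m) := by rw [Nat.odd_iff] at hmodd; omega
        exact ((Nat.Prime.coprime_iff_not_dvd Nat.prime_two).mpr hnd).symm
      exact hcop.dvd_of_dvd_mul_left h2X
    have : (n*(n-1)/2) ≡ 0 [MOD m] := (Nat.modEq_zero_iff_dvd).mpr hdvd
    have := red m α k (show 1 ≤ α by omega) this
    simpa using this
  have hc : ((2*n : ℕ) : ZMod (2*m)) = 2 := by
    have : (2*m : ℕ) ∣ 2 * (k * m ^ (α - 1)) := by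
      apply Nat.mul_dvd_mul_left
      exact Dvd.dvd.mul_left (dvd_pow_self m (by omega)) k
    have hz : ((2 * (k * m ^ (α - 1)) : ℕ) : ZMod (2*m)) = 0 :=
      (ZMod.natCast_eq_zero_iff _ _).mpr this
    rw [hn]
    push_cast [Nat.mul_add] at hz ⊢
    linear_combination hz
  rw [hA, hB, hc, Prod.mk.injEq]
  exact ⟨by ring, rfl⟩
end

section
variable (m α k : ℕ) (hm3 : 3 ≤ m) (hα : 2 ≤ α) (hmodd : Odd m)
local notation "N" => m ^ α
local notation "D" => Dval m α k

include hm3 hα hmodd in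
lemma H1 (c : ZMod (2*m)) (h : Even c.val) : ∀ (t : ℕ) (b : ZMod N),
    (piOne m α k)^[2*t] (b, c) = (b + (t : ZMod N) * ((b - (c.val : ZMod N)) * D), c) := by
  have hDD := DD m α k hα
  intro t
  induction t with
  | zero => intro b; simp
  | succ t ih =>
    intro b
    have h2t : 2*(t+1) = 2*t + 2 := by ring
    rw [h2t, Function.iterate_add_apply]
    have hit2 : (piOne m α k)^[2] (b, c) = piOne m α k (piOne m α k (b, c)) := rfl
    rw [hit2, E1 m α k hm3 hα hmodd b c h, ih]
    rw [Prod.mk.injEq]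
    refine ⟨?_, rfl⟩
    push_cast
    linear_combination ((t : ZMod N) * (b - (c.val : ZMod N))) * hDD

include hm3 hα hmodd in
lemma H2 (c : ZMod (2*m)) (h : Odd c.val) : ∀ (t : ℕ) (b : ZMod N),
    (piOne m α k)^[2*t] (b, c) = (b + (t : ZMod N) * (((c.val : ZMod N) - b) * D), c) := by
  have hDD := DD m α k hα
  intro t
  induction t with
  | zero => intro b; simp
  | succ t ih =>
    intro b
    have h2t : 2*(t+1) = 2*t + 2 := by ring
    rw [h2t, Function.iterate_add_apply]
    have hit2 : (piOne m α k)^[2] (b, c) = piOne m α k (piOne m α k (b, c)) := rfl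
    rw [hit2, E2 m α k hm3 hα hmodd b c h, ih]
    rw [Prod.mk.injEq]
    refine ⟨?_, rfl⟩
    push_cast
    linear_combination (-(t : ZMod N) * ((c.val : ZMod N) - b)) * hDD

include hm3 in
lemma I1 : ∀ (j : ℕ) (b : ZMod N) (c : ZMod (2*m)), Odd c.val →
    Odd ((piOne m α k)^[j] (b, c)).2.val ∧
      ((piOne m α k)^[j] (b, c)).2 = (if Even j then c else 2 - c) := by
  haveI : NeZero (2*m) := ⟨by omega⟩
  intro j
  induction j with
  | zero => intro b c h; exact ⟨h, by simp⟩
  | succ j ih =>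
    intro b c h
    have hC := C2 hm3 c h
    have hno : ¬ Even c.val := by rw [Nat.even_iff]; rw [Nat.odd_iff] at h; omega
    have hstep : piOne m α k (b, c)
        = (barMap m α k b + 2 - (((c.val - 1) / 2 : ℕ) : ZMod N) * Dval m α k, 2 - c) := by
      simp only [piOne]; rw [if_neg hno]
    rw [Function.iterate_succ_apply, hstep]
    obtain ⟨ho, he⟩ := ih _ (2 - c) hC.1
    refine ⟨ho, ?_⟩
    rw [he]
    rcases Nat.even_or_odd j with hj | hj
    · rw [if_pos hj, if_neg (by simpa [Nat.even_add_one] using hj)]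
    · rw [if_neg (Nat.not_even_iff_odd.mpr hj),
        if_pos (Nat.even_add_one.mpr (Nat.not_even_iff_odd.mpr hj))]
      ring

lemma P3 : ∀ (j : ℕ) (b : ZMod N) (c : ZMod (2*m)),
    (piThree m α k)^[j] (b, c) = (b, c + (j : ZMod (2*m))) := by
  intro j
  induction j with
  | zero => intro b c; simp
  | succ j ih =>
    intro b c
    rw [Function.iterate_succ_apply', ih]
    simp only [piThree]
    rw [Prod.mk.injEq]
    refine ⟨rfl, ?_⟩
    push_cast
    ring
end


theorem stmt_13 (m α k : ℕ) (hm : Nat.Prime m) (hmodd : Odd m) (hα : 2 ≤ α)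
    (hk : 1 ≤ k) (hk' : k ≤ m - 1) :
    -- π₂π₁² = π₁²π₂^{1+D}  (permutations acting on the right)
    (∀ x, piOne m α k (piOne m α k (piTwo m α k x)) =
        (piTwo m α k)^[1 + k * m ^ (α - 1)] (piOne m α k (piOne m α k x))) ∧
    -- π₃²π₂ = π₂^{1+D}π₃²
    (∀ x, piTwo m α k (piThree m α k (piThree m α k x)) =
        piThree m α k (piThree m α k ((piTwo m α k)^[1 + k * m ^ (α - 1)] x))) ∧
    -- π₁ has order 2m
    ((piOne m α k)^[2 * m] = id ∧ ∀ j, 0 < j → j < 2 * m → (piOne m α k)^[j] ≠ id) ∧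
    -- π₂ has order m^α
    ((piTwo m α k)^[m ^ α] = id ∧ ∀ j, 0 < j → j < m ^ α → (piTwo m α k)^[j] ≠ id) ∧
    -- π₃ has order 2m
    ((piThree m α k)^[2 * m] = id ∧ ∀ j, 0 < j → j < 2 * m → (piThree m α k)^[j] ≠ id) := by
  have hm3 : 3 ≤ m := by
    have h2 := hm.two_le; have := Nat.odd_iff.mp hmodd; omega
  haveI : NeZero (2*m) := ⟨by omega⟩
  have hα1 : 1 ≤ α := by omega
  have hDD := DD m α k hα
  have hmD := mD m α k hα1
  refine ⟨?_, ?_, ⟨?_, ?_⟩, ⟨?_, ?_⟩, ⟨?_, ?_⟩⟩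
  · -- relation 1
    rintro ⟨b, c⟩
    rcases Nat.even_or_odd c.val with h | h
    · have hs : piTwo m α k (b, c)
          = (b + 1 + ((c.val/2 : ℕ) : ZMod (m^α)) * Dval m α k, c) := by
        simp only [piTwo]; rw [if_pos h]
      rw [hs,
        E1 m α k hm3 hα hmodd (b + 1 + ((c.val/2 : ℕ) : ZMod (m^α)) * Dval m α k) c h,
        E1 m α k hm3 hα hmodd b c h,
        G1 m α k hm3 hα (b + (b - (c.val : ZMod (m^α))) * Dval m α k) c h,
        Prod.mk.injEq]
      exact ⟨by linear_combination ((c.val/2 : ℕ) : ZMod (m^α)) * hDD, rfl⟩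
    · have hno : ¬ Even c.val := by rw [Nat.even_iff]; rw [Nat.odd_iff] at h; omega
      have hC3 := C3 hm3 c h
      have hs : piTwo m α k (b, c)
          = (b - 1 - (((c.val - 1)/2 : ℕ) : ZMod (m^α)) * Dval m α k, c - 2) := by
        simp only [piTwo]; rw [if_neg hno]
      rw [hs,
        E2 m α k hm3 hα hmodd (b - 1 - (((c.val - 1)/2 : ℕ) : ZMod (m^α)) * Dval m α k)
          (c - 2) hC3.1,
        E2 m α k hm3 hα hmodd b c h,
        G2 m α k hm3 hα hmodd (b + (((c.val : ZMod (m^α))) - b) * Dval m α k) c h,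
        Prod.mk.injEq]
      have hv' : (((c-2).val + 2 : ℕ) : ZMod (m^α)) * Dval m α k
          = ((c.val : ℕ) : ZMod (m^α)) * Dval m α k := red m α k hα1 hC3.2.2
      push_cast at hv'
      exact ⟨by linear_combination hv' + (((c.val - 1)/2 : ℕ) : ZMod (m^α)) * hDD, rfl⟩
  · -- relation 2
    rintro ⟨b, c⟩
    have h12 : piThree m α k (piThree m α k (b, c)) = (b, c + 2) := by
      simp only [piThree]; rw [Prod.mk.injEq]; exact ⟨rfl, by ring⟩
    rcases Nat.even_or_odd c.val with h | h
    · have hC4 := C4 hm3 c h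
      have hs : piTwo m α k (b, c + 2)
          = (b + 1 + (((c+2).val/2 : ℕ) : ZMod (m^α)) * Dval m α k, c + 2) := by
        simp only [piTwo]; rw [if_pos hC4.1]
      rw [h12, hs, G1 m α k hm3 hα b c h]
      have h34 : piThree m α k (piThree m α k
          (b + 1 + ((c.val/2 : ℕ) : ZMod (m^α)) * Dval m α k + Dval m α k, c))
          = (b + 1 + ((c.val/2 : ℕ) : ZMod (m^α)) * Dval m α k + Dval m α k, c + 2) := by
        simp only [piThree]; rw [Prod.mk.injEq]; exact ⟨rfl, by ring⟩
      rw [h34, Prod.mk.injEq]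
      have hr : (((c+2).val/2 : ℕ) : ZMod (m^α)) * Dval m α k
          = ((c.val/2 + 1 : ℕ) : ZMod (m^α)) * Dval m α k := red m α k hα1 hC4.2
      push_cast at hr
      exact ⟨by linear_combination hr, rfl⟩
    · have hC5 := C5 hm3 c h
      have hno2 : ¬ Even (c+2).val := by
        rw [Nat.even_iff]; have := Nat.odd_iff.mp hC5.1; omega
      have hs : piTwo m α k (b, c + 2)
          = (b - 1 - ((((c+2).val - 1)/2 : ℕ) : ZMod (m^α)) * Dval m α k, (c + 2) - 2) := by
        simp only [piTwo]; rw [if_neg hno2]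
      rw [h12, hs, G2 m α k hm3 hα hmodd b c h]
      have h34 : piThree m α k (piThree m α k
          (b - 1 - Dval m α k - (((c.val - 1)/2 : ℕ) : ZMod (m^α)) * Dval m α k, c - 2))
          = (b - 1 - Dval m α k - (((c.val - 1)/2 : ℕ) : ZMod (m^α)) * Dval m α k,
              c - 2 + 1 + 1) := by
        simp only [piThree]
      rw [h34, Prod.mk.injEq]
      have hr : ((((c+2).val - 1)/2 : ℕ) : ZMod (m^α)) * Dval m α k
          = (((c.val - 1)/2 + 1 : ℕ) : ZMod (m^α)) * Dval m α k := red m α k hα1 hC5.2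
      push_cast at hr
      exact ⟨by linear_combination -hr, by ring⟩
  · -- π₁ order: 2m-th power is id
    funext x
    obtain ⟨b, c⟩ := x
    rcases Nat.even_or_odd c.val with h | h
    · rw [H1 m α k hm3 hα hmodd c h m b]
      simp only [id_eq, Prod.mk.injEq]
      exact ⟨by linear_combination (b - (c.val : ZMod (m^α))) * hmD, trivial⟩
    · rw [H2 m α k hm3 hα hmodd c h m b]
      simp only [id_eq, Prod.mk.injEq]
      exact ⟨by linear_combination ((c.val : ZMod (m^α)) - b) * hmD, trivial⟩
  · -- π₁ minimality
    intro j hj0 hjlt hid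
    rcases Nat.even_or_odd j with hj | hj
    · obtain ⟨t, rfl⟩ := hj
      have hfun := congrFun hid ((1 : ZMod (m^α)), (0 : ZMod (2*m)))
      have h0e : Even ((0 : ZMod (2*m)).val) := by rw [ZMod.val_zero]; exact Even.zero
      rw [show t + t = 2*t by ring] at hfun
      rw [H1 m α k hm3 hα hmodd 0 h0e t 1] at hfun
      simp only [id_eq, ZMod.val_zero, Nat.cast_zero, Prod.mk.injEq] at hfun
      have h1 := hfun.1
      have htD : ((t * (k * m ^ (α-1)) : ℕ) : ZMod (m^α)) = 0 := by
        rw [Dval] at h1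
        push_cast at h1 ⊢
        linear_combination h1
      rw [ZMod.natCast_eq_zero_iff] at htD
      have hmdvd : m ∣ t * k := by
        have hpow : m ^ α = m ^ (α-1) * m := by
          rw [← pow_succ]; congr 1; omega
        have h2 : m ^ (α-1) * m ∣ m ^ (α-1) * (t * k) := by
          rw [← hpow]
          have : t * (k * m ^ (α-1)) = m ^ (α-1) * (t * k) := by ring
          rwa [this] at htD
        exact (Nat.mul_dvd_mul_iff_left (Nat.pow_pos (n := α-1) (by omega))).mp h2
      rcases (Nat.Prime.dvd_mul hm).mp hmdvd with hd | hd
      · have := Nat.le_of_dvd (by omega) hd; omega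
      · have := Nat.le_of_dvd (by omega) hd; omega
    · have h3v : ((3:ℕ) : ZMod (2*m)).val = 3 := by
        rw [ZMod.val_natCast]; exact Nat.mod_eq_of_lt (by omega)
      have h3o : Odd (((3:ℕ) : ZMod (2*m)).val) := by rw [h3v]; exact ⟨1, rfl⟩
      have hfun := congrFun hid ((0 : ZMod (m^α)), ((3:ℕ) : ZMod (2*m)))
      have hI := (I1 m α k hm3 j 0 ((3:ℕ) : ZMod (2*m)) h3o).2
      rw [if_neg (Nat.not_even_iff_odd.mpr hj)] at hI
      have hsnd := congrArg Prod.snd hfun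
      rw [hI] at hsnd
      simp only [id_eq] at hsnd
      have h4 : ((4:ℕ) : ZMod (2*m)) = 0 := by
        push_cast at hsnd ⊢
        linear_combination -hsnd
      rw [ZMod.natCast_eq_zero_iff] at h4
      have := Nat.le_of_dvd (by omega) h4
      omega
  · -- π₂ order: (m^α)-th power is id
    funext x
    obtain ⟨b, c⟩ := x
    rcases Nat.even_or_odd c.val with h | h
    · rw [F1 m α k hm3 c h (m^α) b]
      simp only [id_eq, Prod.mk.injEq, ZMod.natCast_self]
      exact ⟨by ring, trivial⟩
    · rw [F2 m α k hm3 hα c h (m^α) b]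
      have hA : ((m^α * ((c.val - 1)/2) : ℕ) : ZMod (m^α)) * Dval m α k
          = ((0 : ℕ) : ZMod (m^α)) * Dval m α k := by
        apply red m α k hα1
        exact (Nat.modEq_zero_iff_dvd).mpr
          (Dvd.dvd.mul_right (dvd_pow_self m (by omega)) _)
      have hmodd' : Odd (m^α) := hmodd.pow
      have hB : ((m^α*(m^α-1)/2 : ℕ) : ZMod (m^α)) * Dval m α k
          = ((0 : ℕ) : ZMod (m^α)) * Dval m α k := by
        apply red m α k hα1
        apply (Nat.modEq_zero_iff_dvd).mpr
        have h2d : 2 ∣ m^α - 1 := by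
          have := Nat.odd_iff.mp hmodd'; omega
        rw [Nat.mul_div_assoc _ h2d]
        exact Dvd.dvd.mul_right (dvd_pow_self m (by omega)) _
      have hc2 : ((2*(m^α) : ℕ) : ZMod (2*m)) = 0 := by
        rw [ZMod.natCast_eq_zero_iff]
        exact Nat.mul_dvd_mul_left 2 (dvd_pow_self m (by omega))
      rw [hA, hB, hc2]
      simp only [id_eq, Prod.mk.injEq, ZMod.natCast_self, Nat.cast_zero]
      exact ⟨by ring, by ring⟩
  · -- π₂ minimality
    intro j hj0 hjlt hid
    have hfun := congrFun hid ((0 : ZMod (m^α)), (0 : ZMod (2*m)))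
    have h0e : Even ((0 : ZMod (2*m)).val) := by rw [ZMod.val_zero]; exact Even.zero
    rw [F1 m α k hm3 0 h0e j 0] at hfun
    simp only [id_eq, ZMod.val_zero, Nat.zero_div, Nat.cast_zero, zero_mul, add_zero,
      mul_one, zero_add, Prod.mk.injEq] at hfun
    have hj' : ((j : ℕ) : ZMod (m^α)) = 0 := hfun.1
    rw [ZMod.natCast_eq_zero_iff] at hj'
    have := Nat.le_of_dvd hj0 hj'
    omega
  · -- π₃ order
    funext x
    obtain ⟨b, c⟩ := x
    rw [P3 m α k (2*m) b c]
    simp only [id_eq, Prod.mk.injEq, ZMod.natCast_self]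
    exact ⟨trivial, by ring⟩
  · -- π₃ minimality
    intro j hj0 hjlt hid
    have hfun := congrFun hid ((0 : ZMod (m^α)), (0 : ZMod (2*m)))
    rw [P3 m α k j 0 0] at hfun
    simp only [id_eq, Prod.mk.injEq, zero_add] at hfun
    have hj' : ((j : ℕ) : ZMod (2*m)) = 0 := hfun.2
    rw [ZMod.natCast_eq_zero_iff] at hj'
    have := Nat.le_of_dvd hj0 hj'
    omega
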